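/- Let Γ be a finite connected simplicial graph with no SIL whose vertices are labeled by nontrivial cyclic groups. Then the quotient group Q = G_{Γ̃}/f̃(G_{Γ₀}) is abelian. -/

import Mathlib

open Monoid

namespace ArXiv

universe u uG

variable {V : Type u}

/-- The star of a vertex: the vertex together with its neighbors. -/
def star (Γ : SimpleGraph V) (v : V) : Set V := insert v (Γ.neighborSet v)

/-- `C ⊆ V` is the vertex set of a connected component of the full subgraph of `Γ`
induced on `S`. -/
def IsCompOf (Γ : SimpleGraph V) (S : Set V) (C : Set V) : Prop :=
  ∃ c : (Γ.induce S).ConnectedComponent, C = Subtype.val '' c.supp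

/-- `Γ` has a separating intersection of links: there are distinct non-adjacent vertices
`v, w` such that some connected component of `Γ ∖ (lk(v) ∩ lk(w))` contains neither `v`
nor `w`. -/
def HasSIL (Γ : SimpleGraph V) : Prop :=
  ∃ v w : V, v ≠ w ∧ ¬ Γ.Adj v w ∧
    ∃ C : Set V, IsCompOf Γ ((Γ.neighborSet v ∩ Γ.neighborSet w)ᶜ) C ∧ v ∉ C ∧ w ∉ C

variable (Γ : SimpleGraph V) (G : V → Type uG) [∀ v, Group (G v)]

/-- The commutator relators defining the graph product. -/
def rels : Set (Monoid.CoprodI G) :=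
  {x | ∃ (v w : V) (_ : Γ.Adj v w) (g : G v) (h : G w),
    x = CoprodI.of g * CoprodI.of h * (CoprodI.of g)⁻¹ * (CoprodI.of h)⁻¹}

/-- The graph product of the vertex groups `G v` over the graph `Γ`: the quotient of the
free product by the normal closure of the commutators of adjacent vertex groups. -/
def GraphProduct : Type (max u uG) :=
  Monoid.CoprodI G ⧸ Subgroup.normalClosure (rels Γ G)

instance : Group (GraphProduct Γ G) :=
  inferInstanceAs (Group (Monoid.CoprodI G ⧸ Subgroup.normalClosure (rels Γ G)))

/-- The canonical map from a vertex group into the graph product. -/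
def of {v : V} : G v →* GraphProduct Γ G :=
  (QuotientGroup.mk' (Subgroup.normalClosure (rels Γ G))).comp CoprodI.of

theorem of_commute {v w : V} (h : Γ.Adj v w) (g : G v) (k : G w) :
    Commute (of Γ G g) (of Γ G k) := by
  rw [← commutatorElement_eq_one_iff_commute]
  have hmem : (CoprodI.of g * CoprodI.of k * (CoprodI.of g)⁻¹ * (CoprodI.of k)⁻¹ :
      Monoid.CoprodI G) ∈ Subgroup.normalClosure (rels Γ G) :=
    Subgroup.subset_normalClosure ⟨v, w, h, g, k, rfl⟩
  have h1 : (QuotientGroup.mk' (Subgroup.normalClosure (rels Γ G)))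
      (CoprodI.of g * CoprodI.of k * (CoprodI.of g)⁻¹ * (CoprodI.of k)⁻¹) = 1 :=
    (QuotientGroup.eq_one_iff _).mpr hmem
  simp only [map_mul, map_inv] at h1
  rw [commutatorElement_def]
  exact h1

/-- `π` is the partial conjugation `π_{v,C}`, for vertex groups with chosen generators
`gen`: it conjugates the generators in `C` by (the generator of) `v` and fixes all other
generators. -/
def IsPartialConj (gen : ∀ v, G v) (π : MulAut (GraphProduct Γ G)) (v : V) (C : Set V) :
    Prop :=
  (∀ u ∈ C, ∀ g : G u, π (of Γ G g) = of Γ G (gen v) * of Γ G g * (of Γ G (gen v))⁻¹) ∧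
  (∀ u ∉ C, ∀ g : G u, π (of Γ G g) = of Γ G g)

/-- `π` is the partial conjugation `π_{a,C}` by the element `a` of the vertex group `G v`:
it conjugates the vertex groups in `C` by `a` and fixes all other vertex groups. -/
def IsPartialConjBy {v : V} (a : G v) (π : MulAut (GraphProduct Γ G)) (C : Set V) : Prop :=
  (∀ u ∈ C, ∀ g : G u, π (of Γ G g) = of Γ G a * of Γ G g * (of Γ G a)⁻¹) ∧
  (∀ u ∉ C, ∀ g : G u, π (of Γ G g) = of Γ G g)

/-- The vertex set of the graph `Γ̃`: pairs `p_{v,C}` where `C` is a connected component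
of `Γ ∖ st(v)`. -/
def TV : Type u := {p : V × Set V // IsCompOf Γ ((star Γ p.1)ᶜ) p.2}

/-- The graph `Γ̃`: vertices `p_{v,C}` and `p_{w,D}` are joined by an edge unless
`v, w` are distinct non-adjacent vertices with `v ∈ D` and `w ∈ C`. -/
def tilde : SimpleGraph (TV Γ) where
  Adj p q := p ≠ q ∧
    ¬(p.1.1 ≠ q.1.1 ∧ ¬ Γ.Adj p.1.1 q.1.1 ∧ p.1.1 ∈ q.1.2 ∧ q.1.1 ∈ p.1.2)
  symm := ⟨by
    rintro p q ⟨h1, h2⟩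
    exact ⟨h1.symm, fun ⟨a, b, c, d⟩ => h2 ⟨a.symm, fun e => b e.symm, d, c⟩⟩⟩
  loopless := ⟨fun p h => h.1 rfl⟩

/-- The graph product `G_{Γ̃}`, where the vertex `p_{v,C}` is labeled by (a copy of) the
group `G v`. -/
abbrev TildeProduct : Type (max u uG) :=
  GraphProduct (tilde Γ) (fun p : TV Γ => G p.1.1)

/-- The element `p_v = ∏_C p_{v,C} ∈ G_{Γ̃}`, the product over all connected components
`C` of `Γ ∖ st(v)` (the factors pairwise commute). -/
noncomputable def pvert [Finite V] (gen : ∀ v, G v) (v : V) : TildeProduct Γ G :=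
  haveI : Fintype {C : Set V // IsCompOf Γ ((star Γ v)ᶜ) C} := Fintype.ofFinite _
  Finset.noncommProd (Finset.univ : Finset {C : Set V // IsCompOf Γ ((star Γ v)ᶜ) C})
    (fun c => of (tilde Γ) (fun p : TV Γ => G p.1.1) (v := ⟨(v, c.1), c.2⟩) (gen v))
    (by
      intro a _ b _ hab
      have hadj : (tilde Γ).Adj ⟨(v, a.1), a.2⟩ ⟨(v, b.1), b.2⟩ := by
        show _ ≠ _ ∧ _
        refine ⟨fun h => hab (Subtype.ext (congrArg (fun x : TV Γ => x.1.2) h)), ?_⟩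
        rintro ⟨hne, -⟩
        exact hne rfl
      exact of_commute (tilde Γ) (fun p : TV Γ => G p.1.1) hadj (gen v) (gen v))

/-- The set `Δ` of vertices adjacent to every other vertex of `Γ`. -/
def Delta (Γ : SimpleGraph V) : Set V := {v | ∀ u, u ≠ v → Γ.Adj v u}

/-- The subgroup of the graph product generated by the vertex groups `G v`, `v ∈ T`. -/
def vertexSubgroup (T : Set V) : Subgroup (GraphProduct Γ G) :=
  Subgroup.closure {x | ∃ v ∈ T, ∃ g : G v, x = of Γ G g}

/-- `w` is a reduced word for the element `g` of the graph product: a minimal length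
expression of `g` as a product of nontrivial elements of vertex groups. -/
def IsReducedWord (g : GraphProduct Γ G) (w : List (Σ v : V, G v)) : Prop :=
  (w.map fun l => of Γ G l.2).prod = g ∧ (∀ l ∈ w, l.2 ≠ 1) ∧
    ∀ w' : List (Σ v : V, G v), (w'.map fun l => of Γ G l.2).prod = g →
      w.length ≤ w'.length


theorem IsCompOf.subset {Γ : SimpleGraph V} {S C : Set V} (hC : IsCompOf Γ S C) : C ⊆ S := by
  obtain ⟨c, rfl⟩ := hC
  rintro _ ⟨x, -, rfl⟩
  exact x.2

theorem IsCompOf.eq_of_mem {Γ : SimpleGraph V} {S C D : Set V} (hC : IsCompOf Γ S C)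
    (hD : IsCompOf Γ S D) {x : V} (hxC : x ∈ C) (hxD : x ∈ D) : C = D := by
  obtain ⟨c, rfl⟩ := hC
  obtain ⟨d, rfl⟩ := hD
  obtain ⟨a, ha, rfl⟩ := hxC
  obtain ⟨b, hb, hba⟩ := hxD
  obtain rfl : b = a := Subtype.ext hba
  rw [SimpleGraph.ConnectedComponent.mem_supp_iff] at ha hb
  rw [← ha, ← hb]

theorem Finset.commute_map_of_map_noncommProd_eq_one {ι M H : Type*} [DecidableEq ι]
    [Monoid M] [Group H] {s : Finset ι} {f : ι → M} (comm) (φ : M →* H)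
    (hφ : φ (s.noncommProd f comm) = 1)
    {a : ι} (ha : a ∈ s) {y : M} (hy : ∀ b ∈ s, b ≠ a → Commute y (f b)) :
    Commute (φ (f a)) (φ y) := by
  have hrest : Commute y ((s.erase a).noncommProd f fun _ hb _ hc hbc ↦
      comm (s.mem_of_mem_erase hb) (s.mem_of_mem_erase hc) hbc) :=
    Finset.noncommProd_commute _ _ _ _ fun b hb ↦ hy b (s.mem_of_mem_erase hb)
      (s.ne_of_mem_erase hb)
  rw [← Finset.noncommProd_erase_mul s ha f comm, map_mul] at hφ
  rw [eq_inv_of_mul_eq_one_right hφ]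
  exact (hrest.map φ).symm.inv_left

theorem mul_comm_of_closure_eq_top {H : Type*} [Group H] {S : Set H}
    (hS : Subgroup.closure S = ⊤) (hcomm : ∀ x ∈ S, ∀ y ∈ S, Commute x y) (a b : H) :
    a * b = b * a := by
  have := Subgroup.isMulCommutative_closure hcomm
  have ha : a ∈ Subgroup.closure S := hS ▸ Subgroup.mem_top a
  have hb : b ∈ Subgroup.closure S := hS ▸ Subgroup.mem_top b
  exact congrArg Subtype.val (mul_comm' (⟨a, ha⟩ : Subgroup.closure S) ⟨b, hb⟩)

section GraphProduct

variable (Γ : SimpleGraph V) (G : V → Type uG) [∀ v, Group (G v)]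

theorem closure_range_of_eq_top :
    Subgroup.closure (⋃ v, Set.range (of Γ G (v := v))) = ⊤ := by
  rw [eq_top_iff]
  rintro x -
  obtain ⟨y, rfl⟩ := QuotientGroup.mk'_surjective (Subgroup.normalClosure (rels Γ G)) x
  induction y using Monoid.CoprodI.induction_on with
  | one => exact Subgroup.one_mem _
  | of v g => exact Subgroup.subset_closure (Set.mem_iUnion_of_mem v ⟨g, rfl⟩)
  | mul a b ha hb => exact Subgroup.mul_mem _ ha hb

theorem closure_range_of_gen_eq_top (gen : ∀ v, G v)
    (hgen : ∀ v, Subgroup.zpowers (gen v) = ⊤) :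
    Subgroup.closure (Set.range fun v ↦ of Γ G (gen v)) = ⊤ := by
  rw [eq_top_iff, ← closure_range_of_eq_top, Subgroup.closure_le]
  intro x hx
  obtain ⟨v, g, rfl⟩ := Set.mem_iUnion.mp hx
  obtain ⟨n, rfl⟩ := Subgroup.mem_zpowers_iff.mp (hgen v ▸ Subgroup.mem_top g)
  rw [map_zpow]
  exact zpow_mem (Subgroup.subset_closure
    (Set.mem_range_self (f := fun v ↦ of Γ G (gen v)) v)) n

theorem mul_comm_of_commute_gen {H : Type*} [Group H] (gen : ∀ v, G v)
    (hgen : ∀ v, Subgroup.zpowers (gen v) = ⊤) (φ : GraphProduct Γ G →* H)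
    (hφ : Function.Surjective φ)
    (hcomm : ∀ v w, Commute (φ (of Γ G (gen v))) (φ (of Γ G (gen w))))
    (a b : H) : a * b = b * a := by
  refine mul_comm_of_closure_eq_top ?_ ?_ a b (S := Set.range fun v ↦ φ (of Γ G (gen v)))
  · rw [Set.range_comp' φ, ← MonoidHom.map_closure, closure_range_of_gen_eq_top Γ G gen hgen,
      Subgroup.map_top_of_surjective φ hφ]
  · rintro _ ⟨v, rfl⟩ _ ⟨w, rfl⟩
    exact hcomm v w

end GraphProduct

section Tilde

variable (Γ : SimpleGraph V)

theorem TV.fst_notMem_snd (p : TV Γ) : p.1.1 ∉ p.1.2 :=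
  fun h ↦ p.2.subset h (Set.mem_insert _ _)

theorem tilde_adj_of_notMem {p q : TV Γ} (hpq : p ≠ q) (h : q.1.1 ∉ p.1.2) :
    (tilde Γ).Adj p q :=
  ⟨hpq, fun hbad ↦ h hbad.2.2.2⟩

variable (G : V → Type uG) [∀ v, Group (G v)] [Finite V] (gen : ∀ v, G v)

/-- Once `p_v` dies, `p_{v,C}` is the inverse of the product of the other `p_{v,C'}`; a vertex
`p_{w,D}` with `w ∈ C` lies outside every such `C'`, so it commutes with all of them. -/
theorem commute_of_map_pvert_eq_one {H : Type*} [Group H] (φ : TildeProduct Γ G →* H)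
    (p : TV Γ) (hp : φ (pvert Γ G gen p.1.1) = 1) {q : TV Γ} (hq : q.1.1 ∈ p.1.2)
    (g : G q.1.1) :
    Commute (φ (of (tilde Γ) (fun r : TV Γ ↦ G r.1.1) (v := p) (gen p.1.1)))
      (φ (of (tilde Γ) (fun r : TV Γ ↦ G r.1.1) (v := q) g)) := by
  classical
  let _ : Fintype {C : Set V // IsCompOf Γ ((star Γ p.1.1)ᶜ) C} := Fintype.ofFinite _
  refine Finset.commute_map_of_map_noncommProd_eq_one _ φ hp (Finset.mem_univ ⟨p.1.2, p.2⟩) ?_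
  rintro c - hc
  have hadj : (tilde Γ).Adj ⟨(p.1.1, c.1), c.2⟩ q := by
    refine tilde_adj_of_notMem Γ (fun h ↦ TV.fst_notMem_snd Γ p ?_) fun hqc ↦ hc ?_
    · rwa [← h] at hq
    · exact Subtype.ext (c.2.eq_of_mem p.2 hqc hq)
  exact (of_commute _ _ hadj _ _).symm

end Tilde

theorem Q_abelian_general {V : Type u} [Finite V] (Γ : SimpleGraph V)
    (G : V → Type uG) [∀ v, Group (G v)]
    (gen : ∀ v, G v) (hgen : ∀ v, Subgroup.zpowers (gen v) = ⊤)
    (f : GraphProduct (Γ.induce (Delta Γ)ᶜ) (fun u : ↥(Delta Γ)ᶜ => G u.1) →*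
      TildeProduct Γ G)
    (hf : ∀ u : ↥(Delta Γ)ᶜ,
      f (of (Γ.induce (Delta Γ)ᶜ) (fun x : ↥(Delta Γ)ᶜ => G x.1) (v := u) (gen u.1)) =
        pvert Γ G gen u.1)
    [hN : f.range.Normal] :
    ∀ a b : TildeProduct Γ G ⧸ f.range, a * b = b * a := by
  refine mul_comm_of_commute_gen (tilde Γ) _ (fun p ↦ gen p.1.1) (fun p ↦ hgen p.1.1)
    (QuotientGroup.mk' f.range) (QuotientGroup.mk'_surjective _) fun p q ↦ ?_
  by_cases hpq : p = q
  · rw [hpq]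
  by_cases hadj : (tilde Γ).Adj p q
  · exact (of_commute _ _ hadj _ _).map _
  obtain ⟨hne, hnadj, -, hqp⟩ :
      p.1.1 ≠ q.1.1 ∧ ¬ Γ.Adj p.1.1 q.1.1 ∧ p.1.1 ∈ q.1.2 ∧ q.1.1 ∈ p.1.2 :=
    not_not.mp fun h ↦ hadj ⟨hpq, h⟩
  have hp : p.1.1 ∈ (Delta Γ)ᶜ := fun hΔ ↦ hnadj (hΔ _ hne.symm)
  refine commute_of_map_pvert_eq_one Γ G gen _ p ?_ hqp _
  exact (QuotientGroup.eq_one_iff _).mpr ⟨_, hf ⟨p.1.1, hp⟩⟩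

/-- The quotient group `Q = G_{Γ̃} / f̃(G_{Γ₀})` is abelian. -/
theorem Q_abelian {V : Type u} [Finite V] (Γ : SimpleGraph V)
    (hconn : Γ.Connected) (hsil : ¬ HasSIL Γ)
    (G : V → Type uG) [∀ v, Group (G v)] [∀ v, Nontrivial (G v)]
    (gen : ∀ v, G v) (hgen : ∀ v, Subgroup.zpowers (gen v) = ⊤)
    (f : GraphProduct (Γ.induce (Delta Γ)ᶜ) (fun u : ↥(Delta Γ)ᶜ => G u.1) →*
      TildeProduct Γ G)
    (hf : ∀ u : ↥(Delta Γ)ᶜ,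
      f (of (Γ.induce (Delta Γ)ᶜ) (fun x : ↥(Delta Γ)ᶜ => G x.1) (v := u) (gen u.1)) =
        pvert Γ G gen u.1)
    [hN : f.range.Normal] :
    ∀ a b : TildeProduct Γ G ⧸ f.range, a * b = b * a :=
  Q_abelian_general Γ G gen hgen f hf (hN := hN)

end ArXiv
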